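/- Every pb-generic real is integer-valued random, and moreover partial integer-valued random; that is, no computable integer-valued martingale and no partial computable integer-valued martingale succeeds on a pb-generic real. -/

import Mathlib

namespace IVR

/-! ### Finite binary strings and infinite binary sequences -/

/-- The length-`n` prefix of an infinite binary sequence `X`, as a finite binary string. -/
def str (X : ℕ → Bool) (n : ℕ) : List Bool := (List.range n).map X

/-- A standard encoding of the rationals into the natural numbers
(used to express computability of rational-valued functions). -/
def qenc (q : ℚ) : ℕ := Nat.pair (Encodable.encode q.num) q.den

/-! ### Martingales -/

/-- A (total) martingale: a nonnegative function on binary strings satisfying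
the fairness condition `f σ = (f (σ0) + f (σ1))/2`. -/
structure Martingale where
  toFun : List Bool → ℚ
  nonneg : ∀ σ, 0 ≤ toFun σ
  fair : ∀ σ : List Bool, toFun σ = (toFun (σ ++ [false]) + toFun (σ ++ [true])) / 2

/-- A martingale is integer-valued if each bet is an integer amount:
`f (σi) = f σ ± k` for some natural number `k`. -/
def Martingale.IntegerValued (f : Martingale) : Prop :=
  ∀ σ b, ∃ k : ℕ, f.toFun (σ ++ [b]) = f.toFun σ + k ∨ f.toFun (σ ++ [b]) = f.toFun σ - k

/-- Computability of a martingale. -/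
def Martingale.Comp (f : Martingale) : Prop := Computable fun σ => qenc (f.toFun σ)

/-- A martingale succeeds on `X` if `limsup_n f (X↾n) = ∞`. -/
def Martingale.Succeeds (f : Martingale) (X : ℕ → Bool) : Prop :=
  ∀ c : ℚ, ∀ m : ℕ, ∃ n, m ≤ n ∧ c < f.toFun (str X n)

/-- `X` is integer-valued random if no computable integer-valued martingale succeeds on it. -/
def IVRandom (X : ℕ → Bool) : Prop :=
  ∀ f : Martingale, f.IntegerValued → f.Comp → ¬ f.Succeeds X

/-- A partial martingale: a partial function on binary strings whose domain is
closed under prefixes and which satisfies the fairness condition wherever defined. -/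
structure PartialMartingale where
  toFun : List Bool →. ℚ
  nonneg : ∀ σ q, q ∈ toFun σ → 0 ≤ q
  domClosed : ∀ σ τ : List Bool, σ <+: τ → (toFun τ).Dom → (toFun σ).Dom
  siblings : ∀ σ b, (toFun (σ ++ [b])).Dom → (toFun (σ ++ [!b])).Dom
  fair : ∀ σ q0 q1, q0 ∈ toFun (σ ++ [false]) → q1 ∈ toFun (σ ++ [true]) →
    ((q0 + q1) / 2) ∈ toFun σ

/-- A partial martingale is integer-valued if each bet is an integer amount. -/
def PartialMartingale.IntegerValued (m : PartialMartingale) : Prop :=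
  ∀ σ b q q', q ∈ m.toFun σ → q' ∈ m.toFun (σ ++ [b]) →
    ∃ k : ℕ, q' = q + k ∨ q' = q - k

/-- Partial computability of a partial martingale. -/
def PartialMartingale.Comp (m : PartialMartingale) : Prop :=
  Partrec fun σ => (m.toFun σ).map qenc

/-- A partial martingale succeeds on `X` if `limsup_n m (X↾n) = ∞`. -/
def PartialMartingale.Succeeds (m : PartialMartingale) (X : ℕ → Bool) : Prop :=
  ∀ c : ℚ, ∀ k : ℕ, ∃ n, k ≤ n ∧ ∃ q ∈ m.toFun (str X n), c < q

/-- `X` is partial integer-valued random if no partial computable integer-valued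
martingale succeeds on it. -/
def PartialIVRandom (X : ℕ → Bool) : Prop :=
  ∀ m : PartialMartingale, m.IntegerValued → m.Comp → ¬ m.Succeeds X

/-! ### Oracle computability, Turing reducibility, the jump -/

/-- Codes for partial functions computable relative to an oracle
(Kleene-style, following `Nat.Partrec.Code` with an extra `oracle` constructor). -/
inductive OCode : Type
  | zero
  | succ
  | left
  | right
  | oracle
  | pair (cf cg : OCode)
  | comp (cf cg : OCode)
  | prec (cf cg : OCode)
  | rfind' (cf : OCode)

/-- Evaluation of an oracle code relative to a (partial) oracle `O`. -/
def OCode.eval (O : ℕ →. ℕ) : OCode → ℕ →. ℕ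
  | .zero => fun _ => Part.some 0
  | .succ => fun n => Part.some (n + 1)
  | .left => fun n => Part.some n.unpair.1
  | .right => fun n => Part.some n.unpair.2
  | .oracle => O
  | .pair cf cg => fun n => Nat.pair <$> OCode.eval O cf n <*> OCode.eval O cg n
  | .comp cf cg => fun n => OCode.eval O cg n >>= OCode.eval O cf
  | .prec cf cg =>
    Nat.unpaired fun a n =>
      n.rec (OCode.eval O cf a) fun y IH => do
        let i ← IH
        OCode.eval O cg (Nat.pair a (Nat.pair y i))
  | .rfind' cf =>
    Nat.unpaired fun a m =>
      (Nat.rfind fun n => (fun x => x = 0) <$> OCode.eval O cf (Nat.pair a (n + m))).map (· + m)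

/-- A numbering of the oracle codes. -/
def OCode.ofNat : ℕ → OCode
  | 0 => .zero
  | 1 => .succ
  | 2 => .left
  | 3 => .right
  | 4 => .oracle
  | n + 5 =>
    let m := n.div2.div2
    have hm : m < n + 5 := by
      simp only [m, Nat.div2_val]
      exact lt_of_le_of_lt (le_trans (Nat.div_le_self _ _) (Nat.div_le_self _ _)) (by omega)
    have _m1 : m.unpair.1 < n + 5 := lt_of_le_of_lt m.unpair_left_le hm
    have _m2 : m.unpair.2 < n + 5 := lt_of_le_of_lt m.unpair_right_le hm
    match n.bodd, n.div2.bodd with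
    | false, false => .pair (OCode.ofNat m.unpair.1) (OCode.ofNat m.unpair.2)
    | false, true  => .comp (OCode.ofNat m.unpair.1) (OCode.ofNat m.unpair.2)
    | true , false => .prec (OCode.ofNat m.unpair.1) (OCode.ofNat m.unpair.2)
    | true , true  => .rfind' (OCode.ofNat m)
decreasing_by
  all_goals (try simp_wf)
  all_goals (try simp only [m] at _m1 _m2 hm)
  all_goals omega

/-- The characteristic function of a set of naturals / infinite binary sequence. -/
def charFn (A : ℕ → Bool) : ℕ →. ℕ := fun n => Part.some (cond (A n) 1 0)

/-- `f` is partial computable relative to the oracle `O`. -/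
def RecIn (f : ℕ →. ℕ) (O : ℕ →. ℕ) : Prop := ∃ c : OCode, OCode.eval O c = f

/-- Turing reducibility. -/
def TLE (A B : ℕ → Bool) : Prop := RecIn (charFn A) (charFn B)

/-- Turing equivalence. -/
def TEquiv (A B : ℕ → Bool) : Prop := TLE A B ∧ TLE B A

/-- A function `g : ℕ → ℕ` is computable from `A`. -/
def FnTLE (g : ℕ → ℕ) (A : ℕ → Bool) : Prop := RecIn (fun n => Part.some (g n)) (charFn A)

/-- The Turing jump of `A`: the halting problem relative to `A`. -/
noncomputable def jump (A : ℕ → Bool) : ℕ → Bool := fun e =>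
  @decide ((OCode.eval (charFn A) (OCode.ofNat e) e).Dom) (Classical.propDecidable _)

/-- The empty set. -/
def emptySet : ℕ → Bool := fun _ => false

/-- The halting problem `∅'`. -/
noncomputable def K : ℕ → Bool := jump emptySet

/-- `∅''`. -/
noncomputable def K2 : ℕ → Bool := jump K

/-- `∅'''`. -/
noncomputable def K3 : ℕ → Bool := jump K2

/-- Weak truth table reducibility: `A` is Turing reducible to `B` via a reduction
whose use is bounded by a computable function `u` -- the computation on input `n`
only depends on the first `u n` bits of the oracle. -/
def WttLE (A B : ℕ → Bool) : Prop :=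
  ∃ (c : OCode) (u : ℕ → ℕ), Computable u ∧
    ∀ (n : ℕ) (B' : ℕ → Bool), (∀ k < u n, B' k = B k) →
      OCode.eval (charFn B') c n = Part.some (cond (A n) 1 0)

/-- Weak truth table equivalence. -/
def WttEquiv (A B : ℕ → Bool) : Prop := WttLE A B ∧ WttLE B A

/-- Weak truth table reducibility of a function `f : ℕ → ℕ` to a set `B`. -/
def FnWttLE (f : ℕ → ℕ) (B : ℕ → Bool) : Prop :=
  ∃ (c : OCode) (u : ℕ → ℕ), Computable u ∧
    ∀ (n : ℕ) (B' : ℕ → Bool), (∀ k < u n, B' k = B k) →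
      OCode.eval (charFn B') c n = Part.some (f n)

/-- `A` has array noncomputable Turing degree: for every `f ≤wtt ∅'` there is an
`A`-computable function `g` with `g n > f n` for infinitely many `n`. -/
def ArrayNoncomputable (A : ℕ → Bool) : Prop :=
  ∀ f : ℕ → ℕ, FnWttLE f K → ∃ g : ℕ → ℕ, FnTLE g A ∧ ∀ m, ∃ n, m ≤ n ∧ f n < g n

/-- `A` is computably enumerable. -/
def CE (A : ℕ → Bool) : Prop :=
  ∃ f : ℕ →. ℕ, Nat.Partrec f ∧ ∀ n, A n = true ↔ (f n).Dom

/-- `S` is computably enumerable relative to `O`. -/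
def CEIn (S : ℕ → Bool) (O : ℕ → Bool) : Prop :=
  ∃ f : ℕ →. ℕ, RecIn f (charFn O) ∧ ∀ n, S n = true ↔ (f n).Dom

/-- `A` has high Turing degree: the jump of `A` computes `∅''`. -/
def High (A : ℕ → Bool) : Prop := TLE K2 (jump A)

/-- `A` has high₂ Turing degree: the double jump of `A` computes `∅'''`. -/
def High2 (A : ℕ → Bool) : Prop := TLE K3 (jump (jump A))

/-- `A` has low Turing degree: the jump of `A` is Turing equivalent to `∅'`. -/
def Low (A : ℕ → Bool) : Prop := TEquiv (jump A) K

/-! ### Left-c.e. reals -/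

/-- The real number with binary expansion `X`. -/
noncomputable def binaryVal (X : ℕ → Bool) : ℝ :=
  ∑' n, cond (X n) ((2 : ℝ)⁻¹ ^ (n + 1)) 0

/-- `X` is a left-c.e. real: the limit of a computable increasing sequence of rationals. -/
def LeftCE (X : ℕ → Bool) : Prop :=
  ∃ q : ℕ → ℚ, Computable (fun n => qenc (q n)) ∧ (∀ n, q n ≤ q (n + 1)) ∧
    Filter.Tendsto (fun n => (q n : ℝ)) Filter.atTop (nhds (binaryVal X))

/-! ### Genericity -/

/-- A set of strings `S` is pb-dense: it contains the range of a function
`f` with `f σ ⊒ σ` which has a computable approximation whose number of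
mind-changes on `σ` is bounded by a primitive recursive function `h`. -/
def PbDense (S : Set (List Bool)) : Prop :=
  ∃ (f : List Bool → List Bool) (F : ℕ → List Bool → List Bool) (h : List Bool → ℕ),
    Computable₂ F ∧ Primrec h ∧
    (∀ σ, σ <+: f σ) ∧
    (∀ σ, ∃ s₀, ∀ s, s₀ ≤ s → F s σ = f σ) ∧
    (∀ σ, {s : ℕ | F (s + 1) σ ≠ F s σ}.Finite ∧
      {s : ℕ | F (s + 1) σ ≠ F s σ}.ncard ≤ h σ) ∧
    (∀ σ, f σ ∈ S)

/-- `X` is pb-generic: it has a prefix in every pb-dense set of strings. -/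
def PbGeneric (X : ℕ → Bool) : Prop :=
  ∀ S : Set (List Bool), PbDense S → ∃ n, str X n ∈ S

/-- A computably enumerable set of strings. -/
def CEStrings (W : Set (List Bool)) : Prop :=
  ∃ f : List Bool →. ℕ, Partrec f ∧ ∀ σ, σ ∈ W ↔ (f σ).Dom

/-- `X` is 1-generic: for every c.e. set of strings `W`, either `X` has a prefix
in `W`, or `X` has a prefix no extension of which lies in `W`. -/
def OneGeneric (X : ℕ → Bool) : Prop :=
  ∀ W : Set (List Bool), CEStrings W →
    (∃ n, str X n ∈ W) ∨ (∃ n, ∀ τ : List Bool, str X n <+: τ → τ ∉ W)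

/-!
Suppose a partial computable integer-valued martingale `m` succeeds on `X`. For `σ` in the domain
of `m`, the values of `m` above `σ` are nonnegative and lie in `m σ + ℤ`, so some extension
`f σ` of `σ` has least value among all extensions. Searching, at stage `s`, for the first-found
extension of least value among those of value at most `m σ` seen so far gives a computable
approximation of `f` that changes only when the least value drops by at least one, hence at most
`⌊m σ⌋ + 1 ≤ (⌊m []⌋ + 1) 2^|σ|` times. So the range of `f` is pb-dense and a pb-generic `X` has a
prefix `τ` above which `m` takes no value below `m τ`; by fairness `m` is then constant above `τ`
and cannot succeed on `X`. A total martingale is a special partial one.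
-/

lemma str_succ (X : ℕ → Bool) (n : ℕ) : str X (n + 1) = str X n ++ [X n] := by
  simp [str, List.range_succ]

lemma str_prefix_str (X : ℕ → Bool) {m n : ℕ} (h : m ≤ n) : str X m <+: str X n := by
  induction n, h using Nat.le_induction with
  | base => exact List.prefix_refl _
  | succ n _ ih => exact ih.trans (str_succ X n ▸ List.prefix_append _ _)

/-- Comparison of `qenc`-codes, correct on nonnegative rationals, whose numerators are encoded
as `2 * n`. -/
def qencLt (a b : ℕ) : Bool := decide (a.unpair.1 / 2 * b.unpair.2 < b.unpair.1 / 2 * a.unpair.2)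

lemma primrec_qencLt : Primrec₂ qencLt := by
  have cross : Primrec₂ fun a b : ℕ => a.unpair.1 / 2 * b.unpair.2 :=
    Primrec.nat_mul.comp
      (Primrec.nat_div.comp (Primrec.fst.comp (Primrec.unpair.comp Primrec.fst))
        (Primrec.const 2))
      (Primrec.snd.comp (Primrec.unpair.comp Primrec.snd))
  exact (Primrec.nat_lt.comp cross (cross.comp Primrec.snd Primrec.fst)).decide

lemma qenc_unpair_fst {q : ℚ} (hq : 0 ≤ q) : (qenc q).unpair.1 = 2 * q.num.toNat := by
  rw [qenc, Nat.unpair_pair, ← Int.toNat_of_nonneg (Rat.num_nonneg.2 hq)]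
  rfl

lemma qencLt_qenc {q r : ℚ} (hq : 0 ≤ q) (hr : 0 ≤ r) :
    qencLt (qenc q) (qenc r) = true ↔ q < r := by
  rw [qencLt, decide_eq_true_iff, qenc_unpair_fst hq, qenc_unpair_fst hr, qenc, qenc,
    Nat.unpair_pair, Nat.unpair_pair, Rat.lt_iff, ← Int.toNat_of_nonneg (Rat.num_nonneg.2 hq),
    ← Int.toNat_of_nonneg (Rat.num_nonneg.2 hr)]
  simp only [Nat.mul_div_cancel_left _ two_pos]
  exact_mod_cast Iff.rfl

section PbDense

open Filter

lemma eventuallyConst_of_finite_changes {α : Type*} {u : ℕ → α}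
    (h : {s | u (s + 1) ≠ u s}.Finite) : EventuallyConst u atTop := by
  obtain ⟨N, hN⟩ := h.bddAbove
  exact eventuallyConst_atTop_nat.2
    ⟨N + 1, fun s hs => not_not.1 fun hne => absurd (hN hne) (by omega)⟩

lemma pbDense_of_eventually_mem {S : Set (List Bool)} (F : ℕ → List Bool → List Bool)
    (h : List Bool → ℕ) (hF : Computable₂ F) (hh : Primrec h)
    (hchanges : ∀ σ, {s | F (s + 1) σ ≠ F s σ}.Finite ∧ {s | F (s + 1) σ ≠ F s σ}.ncard ≤ h σ)
    (hlim : ∀ σ, ∀ᶠ s in atTop, σ <+: F s σ ∧ F s σ ∈ S) : PbDense S := by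
  choose f hf using fun σ =>
    eventuallyConst_iff_exists_eventuallyEq.1
      (eventuallyConst_of_finite_changes (u := (F · σ)) (hchanges σ).1)
  have hfS : ∀ σ, σ <+: f σ ∧ f σ ∈ S := fun σ => by
    obtain ⟨s, hs, hfs : F s σ = f σ⟩ := ((hlim σ).and (hf σ)).exists
    exact hfs ▸ hs
  exact ⟨f, F, h, hF, hh, fun σ => (hfS σ).1, fun σ => eventually_atTop.1 (hf σ), hchanges,
    fun σ => (hfS σ).2⟩

lemma primrec_mul_two_pow (C : ℕ) : Primrec fun σ : List Bool => C * 2 ^ σ.length :=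
  Primrec.nat_mul.comp (Primrec.const C)
    ((Primrec₂.unpaired'.1 Nat.Primrec.pow).comp (Primrec.const 2) Primrec.list_length)

end PbDense

namespace PartialMartingale

variable {m : PartialMartingale}

open Classical in
/-- The value of `m` at `σ`, with junk value `0` off the domain. -/
noncomputable def value (m : PartialMartingale) (σ : List Bool) : ℚ :=
  if h : (m.toFun σ).Dom then (m.toFun σ).get h else 0

lemma value_mem {σ : List Bool} (h : (m.toFun σ).Dom) : m.value σ ∈ m.toFun σ := by
  rw [value, dif_pos h]
  exact Part.get_mem h

lemma value_eq_of_mem {σ : List Bool} {q : ℚ} (h : q ∈ m.toFun σ) : m.value σ = q :=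
  Part.mem_unique (value_mem (Part.dom_iff_mem.2 ⟨q, h⟩)) h

lemma value_nonneg (m : PartialMartingale) (σ : List Bool) : 0 ≤ m.value σ := by
  rw [value]
  split
  · exact m.nonneg σ _ (Part.get_mem _)
  · exact le_rfl

lemma dom_of_dom_append {σ : List Bool} {b : Bool} (h : (m.toFun (σ ++ [b])).Dom) :
    (m.toFun σ).Dom :=
  m.domClosed _ _ (List.prefix_append _ _) h

lemma value_append_add_value_append_not {σ : List Bool} {b : Bool}
    (h : (m.toFun (σ ++ [b])).Dom) :
    m.value (σ ++ [b]) + m.value (σ ++ [!b]) = 2 * m.value σ := by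
  have hb := value_mem h
  have hnb := value_mem (m.siblings σ b h)
  cases b with
  | false => linarith [value_eq_of_mem (m.fair σ _ _ hb hnb)]
  | true => linarith [value_eq_of_mem (m.fair σ _ _ hnb hb)]

lemma value_le_two_pow_mul {σ : List Bool} (h : (m.toFun σ).Dom) :
    m.value σ ≤ 2 ^ σ.length * m.value [] := by
  induction σ using List.reverseRecOn with
  | nil => simp
  | append_singleton σ b ih =>
    have hsum := value_append_add_value_append_not h
    have := m.value_nonneg (σ ++ [!b])
    rw [List.length_append, List.length_singleton, pow_succ]
    nlinarith [ih (dom_of_dom_append h), pow_pos (two_pos : (0 : ℚ) < 2) σ.length]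

lemma floor_value_lt_mul_two_pow (m : PartialMartingale) (σ : List Bool) :
    ⌊m.value σ⌋₊ < (⌊m.value []⌋₊ + 1) * 2 ^ σ.length := by
  by_cases h : (m.toFun σ).Dom
  · rw [Nat.floor_lt (m.value_nonneg σ)]
    push_cast
    calc m.value σ ≤ 2 ^ σ.length * m.value [] := value_le_two_pow_mul h
      _ < 2 ^ σ.length * (⌊m.value []⌋₊ + 1) := by gcongr; exact Nat.lt_floor_add_one _
      _ = _ := mul_comm _ _
  · rw [value, dif_neg h, Nat.floor_zero]
    positivity

lemma IntegerValued.exists_eq_add_int (hm : m.IntegerValued) {σ τ : List Bool} (hστ : σ <+: τ)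
    (hτ : (m.toFun τ).Dom) : ∃ z : ℤ, m.value τ = m.value σ + z := by
  obtain ⟨l, rfl⟩ := hστ
  induction l using List.reverseRecOn with
  | nil => exact ⟨0, by simp⟩
  | append_singleton l b ih =>
    rw [← List.append_assoc] at hτ ⊢
    obtain ⟨z, hz⟩ := ih (dom_of_dom_append hτ)
    obtain ⟨k, hk | hk⟩ := hm _ b _ _ (value_mem (dom_of_dom_append hτ)) (value_mem hτ)
    · exact ⟨z + k, by rw [value_eq_of_mem (value_mem hτ), hk, hz]; push_cast; ring⟩
    · exact ⟨z - k, by rw [value_eq_of_mem (value_mem hτ), hk, hz]; push_cast; ring⟩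

lemma IntegerValued.floor_value_lt_floor_value (hm : m.IntegerValued) {σ τ τ' : List Bool}
    (hτ : σ <+: τ) (hτ' : σ <+: τ') (hτd : (m.toFun τ).Dom)
    (hτd' : (m.toFun τ').Dom) (hlt : m.value τ < m.value τ') :
    ⌊m.value τ⌋₊ < ⌊m.value τ'⌋₊ := by
  obtain ⟨z, hz⟩ := hm.exists_eq_add_int hτ hτd
  obtain ⟨z', hz'⟩ := hm.exists_eq_add_int hτ' hτd'
  have hgap : m.value τ + 1 ≤ m.value τ' := by
    have : z < z' := by rw [hz, hz'] at hlt; exact_mod_cast (add_lt_add_iff_left _).1 hlt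
    rw [hz, hz', add_assoc]
    gcongr
    exact_mod_cast this
  calc ⌊m.value τ⌋₊ < ⌊m.value τ⌋₊ + 1 := Nat.lt_succ_self _
    _ = ⌊m.value τ + 1⌋₊ := (Nat.floor_add_one (m.value_nonneg τ)).symm
    _ ≤ ⌊m.value τ'⌋₊ := Nat.floor_le_floor hgap

def IsMinOnCone (m : PartialMartingale) (τ : List Bool) : Prop :=
  (m.toFun τ).Dom → ∀ ρ, τ <+: ρ → (m.toFun ρ).Dom → m.value τ ≤ m.value ρ

/-- Both children of a string are at least its value and average to it, so they equal it. -/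
lemma IsMinOnCone.value_eq {τ ρ : List Bool} (hmin : m.IsMinOnCone τ) (hτρ : τ <+: ρ)
    (hρ : (m.toFun ρ).Dom) : m.value ρ = m.value τ := by
  obtain ⟨l, rfl⟩ := hτρ
  have hτ : (m.toFun τ).Dom := m.domClosed _ _ (List.prefix_append _ _) hρ
  induction l using List.reverseRecOn with
  | nil => simp
  | append_singleton l b ih =>
    rw [← List.append_assoc] at hρ ⊢
    have hsum := value_append_add_value_append_not hρ
    have hb := hmin hτ _ ((List.prefix_append τ l).trans (List.prefix_append _ [b])) hρ
    have hnb := hmin hτ _ ((List.prefix_append τ l).trans (List.prefix_append _ [!b]))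
      (m.siblings _ b hρ)
    linarith [ih (dom_of_dom_append hρ)]

lemma Succeeds.dom {X : ℕ → Bool} (hS : m.Succeeds X) (n : ℕ) : (m.toFun (str X n)).Dom := by
  obtain ⟨n', hn', q, hq, -⟩ := hS 0 n
  exact m.domClosed _ _ (str_prefix_str X hn') (Part.dom_iff_mem.2 ⟨q, hq⟩)

lemma not_succeeds_of_isMinOnCone {X : ℕ → Bool} {n : ℕ} (hmin : m.IsMinOnCone (str X n)) :
    ¬ m.Succeeds X := by
  intro hS
  obtain ⟨n', hn', q, hq, hlt⟩ := hS (m.value (str X n)) n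
  rw [← value_eq_of_mem hq, hmin.value_eq (str_prefix_str X hn') (hS.dom n')] at hlt
  exact lt_irrefl _ hlt

end PartialMartingale

def Martingale.toPartial (f : Martingale) : PartialMartingale where
  toFun σ := Part.some (f.toFun σ)
  nonneg σ q hq := Part.mem_some_iff.1 hq ▸ f.nonneg σ
  domClosed _ _ _ _ := trivial
  siblings _ _ _ := trivial
  fair σ q0 q1 h0 h1 := by
    rw [Part.mem_some_iff] at h0 h1 ⊢
    rw [h0, h1, ← f.fair σ]

section Search

open Encodable Nat.Partrec

variable (c : Code)

/-- Index `i` proposes the string coded by `i.unpair.2`, to be evaluated at stage `i.unpair.1`;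
an index coding no string proposes `σ` itself. -/
def candidate (σ : List Bool) (i : ℕ) : List Bool := (decode i.unpair.2).getD σ

def candidateCode (σ : List Bool) (i : ℕ) : ℕ :=
  (Code.evaln i.unpair.1 c (encode (candidate σ i))).getD 0

/-- The last conjunct, `m (candidate σ i) ≤ m σ`, makes the least value found start at most at
`m σ`, which is what bounds the number of mind changes of the search. -/
def admissible (σ : List Bool) (i : ℕ) : Bool :=
  decide ((candidate σ i).take σ.length = σ) &&
    (Code.evaln i.unpair.1 c (encode σ)).isSome &&
    (Code.evaln i.unpair.1 c (encode (candidate σ i))).isSome &&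
    !qencLt ((Code.evaln i.unpair.1 c (encode σ)).getD 0) (candidateCode c σ i)

def searchStep (σ : List Bool) (b : Option ℕ) (i : ℕ) : Option ℕ :=
  bif admissible c σ i &&
      b.elim true (fun j => qencLt (candidateCode c σ i) (candidateCode c σ j))
    then some i else b

def bestBelow (σ : List Bool) (s : ℕ) : Option ℕ := (List.range s).foldl (searchStep c σ) none

def approx (s : ℕ) (σ : List Bool) : List Bool := (bestBelow c σ s).elim σ (candidate σ)

lemma primrec_candidate : Primrec₂ candidate :=
  Primrec.option_getD.comp
    (Primrec.decode.comp (Primrec.snd.comp (Primrec.unpair.comp Primrec.snd))) Primrec.fst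

lemma primrec_evaln_encode :
    Primrec₂ fun (t : ℕ) (τ : List Bool) => Code.evaln t c (encode τ) :=
  Code.primrec_evaln.comp
    (Primrec.pair (Primrec.pair Primrec.fst (Primrec.const c)) (Primrec.encode.comp Primrec.snd))

lemma primrec_candidateCode : Primrec₂ (candidateCode c) :=
  Primrec.option_getD.comp
    ((primrec_evaln_encode c).comp (Primrec.fst.comp (Primrec.unpair.comp Primrec.snd))
      primrec_candidate)
    (Primrec.const 0)

lemma primrec_admissible : Primrec₂ (admissible c) := by
  have hσ : Primrec₂ fun (σ : List Bool) (i : ℕ) => Code.evaln i.unpair.1 c (encode σ) :=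
    (primrec_evaln_encode c).comp (Primrec.fst.comp (Primrec.unpair.comp Primrec.snd)) Primrec.fst
  have hτ : Primrec₂ fun (σ : List Bool) (i : ℕ) =>
      Code.evaln i.unpair.1 c (encode (candidate σ i)) :=
    (primrec_evaln_encode c).comp (Primrec.fst.comp (Primrec.unpair.comp Primrec.snd))
      primrec_candidate
  have hpre : Primrec₂ fun (σ : List Bool) (i : ℕ) =>
      decide ((candidate σ i).take σ.length = σ) :=
    (Primrec.eq.comp (Primrec.list_take.comp (Primrec.list_length.comp Primrec.fst)
      primrec_candidate) Primrec.fst).decide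
  exact Primrec.and.comp (Primrec.and.comp (Primrec.and.comp hpre
    (Primrec.option_isSome.comp hσ)) (Primrec.option_isSome.comp hτ))
    (Primrec.not.comp (primrec_qencLt.comp (Primrec.option_getD.comp hσ (Primrec.const 0))
      (primrec_candidateCode c)))

lemma primrec_searchStep :
    Primrec₂ fun (σ : List Bool) (p : Option ℕ × ℕ) => searchStep c σ p.1 p.2 := by
  have hi : Primrec₂ fun (_ : List Bool) (p : Option ℕ × ℕ) => p.2 :=
    Primrec.snd.comp Primrec.snd
  have hb : Primrec₂ fun (_ : List Bool) (p : Option ℕ × ℕ) => p.1 :=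
    Primrec.fst.comp Primrec.snd
  have hbetter : Primrec₂ fun (σ : List Bool) (p : Option ℕ × ℕ) =>
      p.1.elim true (fun j => qencLt (candidateCode c σ p.2) (candidateCode c σ j)) := by
    refine (Primrec.option_casesOn (g := fun (a : List Bool × (Option ℕ × ℕ)) j =>
      qencLt (candidateCode c a.1 a.2.2) (candidateCode c a.1 j)) hb (Primrec.const true)
      (primrec_qencLt.comp ((primrec_candidateCode c).comp (Primrec.fst.comp Primrec.fst)
        (Primrec.snd.comp (Primrec.snd.comp Primrec.fst))) ((primrec_candidateCode c).comp
          (Primrec.fst.comp Primrec.fst) Primrec.snd))).of_eq fun a => ?_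
    obtain ⟨σ, _ | j, i⟩ := a <;> rfl
  exact Primrec.cond (Primrec.and.comp ((primrec_admissible c).comp Primrec.fst hi) hbetter)
    (Primrec.option_some.comp hi) hb

lemma primrec_bestBelow : Primrec₂ (bestBelow c) :=
  Primrec.list_foldl (Primrec.list_range.comp Primrec.snd) (Primrec.const none)
    ((primrec_searchStep c).comp (Primrec.fst.comp Primrec.fst) Primrec.snd).to₂

lemma primrec_approx : Primrec₂ (approx c) :=
  (Primrec.option_casesOn ((primrec_bestBelow c).comp Primrec.snd Primrec.fst) Primrec.snd
    (primrec_candidate.comp (Primrec.snd.comp Primrec.fst) Primrec.snd).to₂).of_eq fun p => by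
    rcases h : bestBelow c p.2 p.1 with _ | _ <;> simp [approx, h]

end Search

section SearchSpec

open Encodable Nat.Partrec Filter

def PartialMartingale.HasCode (m : PartialMartingale) (c : Code) : Prop :=
  ∀ τ : List Bool, c.eval (encode τ) = (m.toFun τ).map qenc

lemma PartialMartingale.Comp.exists_hasCode {m : PartialMartingale} (h : m.Comp) :
    ∃ c, m.HasCode c := by
  obtain ⟨c, hc⟩ := Code.exists_code.1 h
  refine ⟨c, fun τ => ?_⟩
  rw [hc]
  simp only [encodek, Part.coe_some, Part.bind_some, Part.map_map]
  rfl

variable {m : PartialMartingale} {c : Code} {σ : List Bool}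

namespace PartialMartingale.HasCode

lemma dom_of_isSome (hc : m.HasCode c) {t : ℕ} {τ : List Bool}
    (h : (Code.evaln t c (encode τ)).isSome) :
    (m.toFun τ).Dom ∧ (Code.evaln t c (encode τ)).getD 0 = qenc (m.value τ) := by
  obtain ⟨x, hx⟩ := Option.isSome_iff_exists.1 h
  obtain ⟨q, hq, rfl⟩ := Part.mem_map_iff _ |>.1 (hc τ ▸ Code.evaln_sound hx)
  exact ⟨Part.dom_iff_mem.2 ⟨q, hq⟩, by rw [hx, Option.getD_some, value_eq_of_mem hq]⟩

lemma eventually_isSome (hc : m.HasCode c) {τ : List Bool} (h : (m.toFun τ).Dom) :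
    ∀ᶠ t in atTop, (Code.evaln t c (encode τ)).isSome := by
  have : qenc (m.value τ) ∈ c.eval (encode τ) := by
    rw [hc τ]
    exact Part.mem_map _ (value_mem h)
  obtain ⟨k, hk⟩ := Code.evaln_complete.1 this
  filter_upwards [eventually_ge_atTop k] with t ht
  exact Option.isSome_iff_exists.2 ⟨_, Code.evaln_mono ht hk⟩

lemma of_admissible (hc : m.HasCode c) {i : ℕ} (h : admissible c σ i = true) :
    σ <+: candidate σ i ∧ (m.toFun σ).Dom ∧ (m.toFun (candidate σ i)).Dom ∧
      m.value (candidate σ i) ≤ m.value σ := by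
  simp only [admissible, candidateCode, Bool.and_eq_true, decide_eq_true_eq,
    Bool.not_eq_true'] at h
  obtain ⟨⟨⟨hpre, hσ⟩, hτ⟩, hlt⟩ := h
  obtain ⟨hσd, hσv⟩ := hc.dom_of_isSome hσ
  obtain ⟨hτd, hτv⟩ := hc.dom_of_isSome hτ
  rw [hσv, hτv, ← Bool.not_eq_true, qencLt_qenc (value_nonneg _ _) (value_nonneg _ _)] at hlt
  exact ⟨List.prefix_iff_eq_take.2 hpre.symm, hσd, hτd, not_lt.1 hlt⟩

lemma exists_admissible (hc : m.HasCode c) {ρ : List Bool} (hσ : (m.toFun σ).Dom)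
    (hσρ : σ <+: ρ) (hρ : (m.toFun ρ).Dom) (hle : m.value ρ ≤ m.value σ) :
    ∃ i, admissible c σ i = true ∧ candidate σ i = ρ := by
  obtain ⟨t, hσt, hρt⟩ := ((hc.eventually_isSome hσ).and (hc.eventually_isSome hρ)).exists
  have hcand : candidate σ (Nat.pair t (encode ρ)) = ρ := by
    simp [candidate, Nat.unpair_pair, encodek]
  refine ⟨Nat.pair t (encode ρ), ?_, hcand⟩
  simp only [admissible, candidateCode, hcand, Nat.unpair_pair, Bool.and_eq_true,
    decide_eq_true_eq, Bool.not_eq_true', hσt, hρt, (hc.dom_of_isSome hσt).2,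
    (hc.dom_of_isSome hρt).2]
  refine ⟨⟨⟨(List.prefix_iff_eq_take.1 hσρ).symm, trivial⟩, trivial⟩, ?_⟩
  rw [← Bool.not_eq_true, qencLt_qenc (value_nonneg _ _) (value_nonneg _ _)]
  exact not_lt.2 hle

lemma qencLt_candidateCode (hc : m.HasCode c) {i j : ℕ} (hi : admissible c σ i = true)
    (hj : admissible c σ j = true) :
    qencLt (candidateCode c σ i) (candidateCode c σ j) = true ↔
      m.value (candidate σ i) < m.value (candidate σ j) := by
  simp only [admissible, Bool.and_eq_true] at hi hj
  rw [candidateCode, candidateCode, (hc.dom_of_isSome hi.1.2).2, (hc.dom_of_isSome hj.1.2).2,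
    qencLt_qenc (value_nonneg _ _) (value_nonneg _ _)]

end PartialMartingale.HasCode

lemma bestBelow_succ (s : ℕ) :
    bestBelow c σ (s + 1) = searchStep c σ (bestBelow c σ s) s := by
  simp [bestBelow, List.range_succ, List.foldl_append]

lemma searchStep_none (i : ℕ) :
    searchStep c σ none i = bif admissible c σ i then some i else none := by
  simp [searchStep]

lemma searchStep_some (i j : ℕ) :
    searchStep c σ (some j) i =
      bif admissible c σ i && qencLt (candidateCode c σ i) (candidateCode c σ j)
      then some i else some j := rfl

lemma admissible_of_bestBelow_eq_some {s j : ℕ} (h : bestBelow c σ s = some j) :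
    j < s ∧ admissible c σ j = true := by
  induction s generalizing j with
  | zero => simp [bestBelow] at h
  | succ s ih =>
    rw [bestBelow_succ] at h
    rcases hb : bestBelow c σ s with _ | j'
    · rw [hb, searchStep_none] at h
      cases ha : admissible c σ s <;> simp_all
    · rw [hb, searchStep_some] at h
      cases ha : admissible c σ s && qencLt (candidateCode c σ s) (candidateCode c σ j')
      · rw [ha, cond_false, Option.some_inj] at h
        exact h ▸ (ih hb).imp_left Nat.lt_succ_of_lt
      · rw [ha, cond_true, Option.some_inj] at h
        exact h ▸ ⟨Nat.lt_succ_self s, Bool.and_elim_left ha⟩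

lemma PartialMartingale.HasCode.exists_bestBelow_le (hc : m.HasCode c) {i s : ℕ}
    (hi : admissible c σ i = true) (his : i < s) :
    ∃ j, bestBelow c σ s = some j ∧ m.value (candidate σ j) ≤ m.value (candidate σ i) := by
  induction s with
  | zero => exact absurd his (Nat.not_lt_zero i)
  | succ s ih =>
    rw [bestBelow_succ]
    rcases Nat.lt_succ_iff_lt_or_eq.1 his with his | rfl
    · obtain ⟨j, hb, hj⟩ := ih his
      rw [hb, searchStep_some]
      cases ha : admissible c σ s && qencLt (candidateCode c σ s) (candidateCode c σ j)
      · exact ⟨j, rfl, hj⟩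
      · obtain ⟨hs, hlt⟩ := Bool.and_eq_true_iff.1 ha
        have hj' := (admissible_of_bestBelow_eq_some hb).2
        exact ⟨s, rfl, ((hc.qencLt_candidateCode hs hj').1 hlt).le.trans hj⟩
    · rcases hb : bestBelow c σ i with _ | j
      · exact ⟨i, by rw [searchStep_none, hi, cond_true], le_rfl⟩
      · rw [searchStep_some, hi, Bool.true_and]
        cases hlt : qencLt (candidateCode c σ i) (candidateCode c σ j)
        · have hj' := (admissible_of_bestBelow_eq_some hb).2
          refine ⟨j, rfl, not_lt.1 fun h => ?_⟩
          rw [← hc.qencLt_candidateCode hi hj', hlt] at h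
          exact Bool.false_ne_true h
        · exact ⟨i, rfl, le_rfl⟩

lemma PartialMartingale.HasCode.bestBelow_succ_of_ne (hc : m.HasCode c) {s : ℕ}
    (h : bestBelow c σ (s + 1) ≠ bestBelow c σ s) :
    bestBelow c σ (s + 1) = some s ∧ admissible c σ s = true ∧
      ∀ j, bestBelow c σ s = some j → m.value (candidate σ s) < m.value (candidate σ j) := by
  rw [bestBelow_succ] at h ⊢
  rcases hb : bestBelow c σ s with _ | j
  · rw [hb, searchStep_none] at h
    rw [searchStep_none]
    cases ha : admissible c σ s
    · simp [ha] at h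
    · simp
  · rw [hb, searchStep_some] at h
    rw [searchStep_some]
    cases ha : admissible c σ s && qencLt (candidateCode c σ s) (candidateCode c σ j)
    · simp [ha] at h
    · obtain ⟨hs, hlt⟩ := Bool.and_eq_true_iff.1 ha
      refine ⟨rfl, hs, fun j' hj' => ?_⟩
      cases Option.some_inj.1 hj'
      exact (hc.qencLt_candidateCode hs (admissible_of_bestBelow_eq_some hb).2).1 hlt

/-- Each change of the search strictly lowers the integer part of the least value found, which
starts at most `⌊m σ⌋`, because values above `σ` differ from each other by integers. -/
lemma PartialMartingale.HasCode.changes_bestBelow (hc : m.HasCode c) (hm : m.IntegerValued)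
    (σ : List Bool) :
    {s | bestBelow c σ (s + 1) ≠ bestBelow c σ s}.Finite ∧
      {s | bestBelow c σ (s + 1) ≠ bestBelow c σ s}.ncard ≤ ⌊m.value σ⌋₊ + 1 := by
  set D := {s | bestBelow c σ (s + 1) ≠ bestBelow c σ s}
  let φ : ℕ → ℕ := fun s => ⌊m.value (candidate σ s)⌋₊
  have hmaps : Set.MapsTo φ D (Set.Iic ⌊m.value σ⌋₊) := fun s hs =>
    Nat.floor_le_floor (hc.of_admissible (hc.bestBelow_succ_of_ne hs).2.1).2.2.2
  have hanti : StrictAntiOn φ D := by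
    intro s hs s' hs' hss'
    obtain ⟨-, hadm, -⟩ := hc.bestBelow_succ_of_ne hs
    obtain ⟨-, hadm', hlt'⟩ := hc.bestBelow_succ_of_ne hs'
    obtain ⟨j, hj, hjs⟩ := hc.exists_bestBelow_le hadm (hss' : s < s')
    obtain ⟨hpre, -, hd, -⟩ := hc.of_admissible hadm
    obtain ⟨hpre', -, hd', -⟩ := hc.of_admissible hadm'
    exact hm.floor_value_lt_floor_value hpre' hpre hd' hd ((hlt' j hj).trans_le hjs)
  have hfin : D.Finite := Set.Finite.of_injOn hmaps hanti.injOn (Set.finite_Iic _)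
  refine ⟨hfin, ?_⟩
  simpa using Set.ncard_le_ncard_of_injOn φ hmaps hanti.injOn (Set.finite_Iic _)

lemma PartialMartingale.HasCode.eventually_isMinOnCone_approx (hc : m.HasCode c)
    (hm : m.IntegerValued) (σ : List Bool) :
    ∀ᶠ s in atTop, σ <+: approx c s σ ∧ m.IsMinOnCone (approx c s σ) := by
  obtain ⟨s₀, hs₀⟩ :=
    eventuallyConst_atTop.1 (eventuallyConst_of_finite_changes (hc.changes_bestBelow hm σ).1)
  have hlimit : ∀ i, admissible c σ i = true →
      ∃ j, bestBelow c σ s₀ = some j ∧ m.value (candidate σ j) ≤ m.value (candidate σ i) :=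
    fun i hi => hs₀ (max s₀ (i + 1)) (le_max_left _ _) ▸
      hc.exists_bestBelow_le hi (Nat.lt_of_lt_of_le (Nat.lt_succ_self i) (le_max_right _ _))
  filter_upwards [eventually_ge_atTop s₀] with s hs
  rw [approx, hs₀ s hs]
  rcases hb : bestBelow c σ s₀ with _ | j
  · refine ⟨List.prefix_refl σ, fun hσ => ?_⟩
    obtain ⟨i, hi, -⟩ := hc.exists_admissible hσ (List.prefix_refl σ) hσ le_rfl
    obtain ⟨j, hj, -⟩ := hlimit i hi
    exact absurd (hb ▸ hj) (Option.some_ne_none j).symm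
  · obtain ⟨hpre, hσ, -, hjσ⟩ := hc.of_admissible (admissible_of_bestBelow_eq_some hb).2
    refine ⟨hpre, fun _ ρ hρ hρd => ?_⟩
    by_cases hle : m.value ρ ≤ m.value σ
    · obtain ⟨i, hi, rfl⟩ := hc.exists_admissible hσ (hpre.trans hρ) hρd hle
      obtain ⟨j', hj', hle'⟩ := hlimit i hi
      exact Option.some_inj.1 (hb ▸ hj') ▸ hle'
    · exact hjσ.trans (le_of_not_ge hle)

end SearchSpec

lemma PartialMartingale.IntegerValued.pbDense_isMinOnCone {m : PartialMartingale}
    (hm : m.IntegerValued) (hcomp : m.Comp) : PbDense {τ | m.IsMinOnCone τ} := by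
  obtain ⟨c, hc⟩ := hcomp.exists_hasCode
  refine pbDense_of_eventually_mem (approx c) (fun σ => (⌊m.value []⌋₊ + 1) * 2 ^ σ.length)
    (primrec_approx c).to_comp (primrec_mul_two_pow _) (fun σ => ?_)
    (hc.eventually_isMinOnCone_approx hm)
  have hsub : {s | approx c (s + 1) σ ≠ approx c s σ} ⊆
      {s | bestBelow c σ (s + 1) ≠ bestBelow c σ s} :=
    fun s hs hb => hs (by rw [approx, approx, hb])
  obtain ⟨hfin, hcard⟩ := hc.changes_bestBelow hm σ
  exact ⟨hfin.subset hsub,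
    (Set.ncard_le_ncard hsub hfin).trans (hcard.trans (m.floor_value_lt_mul_two_pow σ))⟩

lemma PbGeneric.partialIVRandom {X : ℕ → Bool} (hX : PbGeneric X) : PartialIVRandom X := by
  intro m hm hcomp hS
  obtain ⟨n, hn⟩ := hX _ (hm.pbDense_isMinOnCone hcomp)
  exact PartialMartingale.not_succeeds_of_isMinOnCone hn hS

lemma PbGeneric.ivRandom {X : ℕ → Bool} (hX : PbGeneric X) : IVRandom X := by
  intro f hf hcomp hS
  refine hX.partialIVRandom f.toPartial ?_ ?_ ?_
  · intro σ b q q' hq hq'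
    rw [Martingale.toPartial, Part.mem_some_iff] at hq hq'
    exact hq ▸ hq' ▸ hf σ b
  · exact hcomp.partrec.of_eq fun σ => (Part.map_some _ _).symm
  · intro C k
    obtain ⟨n, hn, hlt⟩ := hS C k
    exact ⟨n, hn, _, Part.mem_some _, hlt⟩

/-- Every pb-generic real is integer-valued random, and moreover
partial integer-valued random. -/
theorem pbGeneric_is_IVRandom_and_PartialIVRandom (X : ℕ → Bool) (hX : PbGeneric X) :
    IVRandom X ∧ PartialIVRandom X :=
  ⟨hX.ivRandom, hX.partialIVRandom⟩

end IVR
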